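/- arXiv:1403.5367 — 2 statements merged into one kernel-verified Lean document; each statement's English description precedes it below -/
import Mathlib

section
/- Let 0 < μ < π, let S = {z ∈ ℂ \ {0} : |arg z| < μ} be the open sector, and let g : S → ℂ be holomorphic with |g(z)| ≤ C·min(|z|^ε, |z|^{-ε}) for some constants C, ε > 0. Then for every z ∈ S the integral F(z) = ∫₀^∞ g(t z) dt/t converges absolutely, and F is constant on S, equal to ∫₀^∞ g(t) dt/t. -/
open MeasureTheory Set Complex Filter Topology
open scoped Interval Real

/-!
Substituting `t = eˣ` turns `∫₀^∞ g(tz) dt/t` into `∫_ℝ g(exp(x + i arg z)) dx`, an integral of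
`g ∘ exp` along a horizontal line in the strip `|Im w| < μ`, which `exp` maps into the sector.
There `g ∘ exp` is holomorphic and bounded by `C e^{-ε |Re w|}`, so Cauchy's theorem on the
rectangles `[-T, T] × [0, arg z]`, whose vertical sides vanish as `T → ∞`, moves the line to the
real axis.
-/

def sector (μ : ℝ) : Set ℂ := {z | z ≠ 0 ∧ |z.arg| < μ}

lemma abs_arg_exp_le_abs_im (w : ℂ) : |(cexp w).arg| ≤ |w.im| := by
  rcases le_or_gt π |w.im| with h | h
  · exact (abs_arg_le_pi _).trans h
  · rw [arg_exp, (toIocMod_eq_self _).2 ⟨(abs_lt.1 h).1, by linarith [(abs_lt.1 h).2]⟩]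

lemma cexp_mem_sector {μ : ℝ} {w : ℂ} (hw : |w.im| < μ) : cexp w ∈ sector μ :=
  ⟨exp_ne_zero w, (abs_arg_exp_le_abs_im w).trans_lt hw⟩

lemma min_exp_rpow_exp_rpow_neg {ε : ℝ} (hε : 0 ≤ ε) (x : ℝ) :
    min (Real.exp x ^ ε) (Real.exp x ^ (-ε)) = Real.exp (-ε * |x|) := by
  rw [← Real.exp_mul, ← Real.exp_mul, ← Real.exp_monotone.map_min]
  congr 1
  rcases abs_cases x with ⟨h, hx⟩ | ⟨h, hx⟩ <;> rw [h]
  · rw [min_eq_right (by nlinarith)]; ring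
  · rw [min_eq_left (by nlinarith)]; ring

lemma integrable_exp_neg_mul_abs {ε : ℝ} (hε : 0 < ε) :
    Integrable fun x : ℝ => Real.exp (-ε * |x|) := by
  rw [← integrableOn_univ, ← Iic_union_Ioi (a := 0), integrableOn_union]
  constructor
  · refine (integrableOn_exp_mul_Iic hε 0).congr_fun (fun x hx => ?_) measurableSet_Iic
    rw [abs_of_nonpos hx]; ring_nf
  · refine (integrableOn_exp_mul_Ioi (neg_neg_of_pos hε) 0).congr_fun (fun x hx => ?_)
      measurableSet_Ioi
    rw [abs_of_pos hx]

lemma tendsto_exp_neg_mul_abs_cocompact {ε : ℝ} (hε : 0 < ε) :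
    Tendsto (fun x : ℝ => Real.exp (-ε * |x|)) (cocompact ℝ) (𝓝 0) :=
  Real.tendsto_exp_atBot.comp <|
    tendsto_norm_cocompact_atTop.const_mul_atTop_of_neg (neg_neg_of_pos hε)

theorem integral_add_mul_I_eq_of_differentiableOn {E : Type*} [NormedAddCommGroup E]
    [NormedSpace ℂ E] {f : ℂ → E} {y₁ y₂ : ℝ} {b : ℝ → ℝ}
    (hf : DifferentiableOn ℂ f {w | w.im ∈ [[y₁, y₂]]})
    (h₁ : Integrable fun x : ℝ => f (x + y₁ * I)) (h₂ : Integrable fun x : ℝ => f (x + y₂ * I))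
    (hb : ∀ x : ℝ, ∀ y ∈ [[y₁, y₂]], ‖f (x + y * I)‖ ≤ b x)
    (hb_lim : Tendsto b (cocompact ℝ) (𝓝 0)) :
    ∫ x : ℝ, f (x + y₁ * I) = ∫ x : ℝ, f (x + y₂ * I) := by
  set vertical : ℝ → E := fun x => ∫ y in y₁..y₂, f (x + y * I)
  have hvertical : Tendsto vertical (cocompact ℝ) (𝓝 0) := by
    refine squeeze_zero_norm (fun x => ?_) (by simpa using hb_lim.mul_const |y₂ - y₁|)
    exact intervalIntegral.norm_integral_le_of_norm_le_const
      fun y hy => hb x y (uIoc_subset_uIcc hy)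
  have hrect : ∀ T : ℝ, (∫ x in -T..T, f (x + y₁ * I)) - (∫ x in -T..T, f (x + y₂ * I)) +
      I • vertical T - I • vertical (-T) = 0 := fun T => by
    simpa [vertical] using integral_boundary_rect_eq_zero_of_differentiableOn f (-T + y₁ * I)
      (T + y₂ * I) (hf.mono fun w hw => by simpa using hw.2)
  have hlim := (((intervalIntegral_tendsto_integral h₁ tendsto_neg_atTop_atBot tendsto_id).sub
    (intervalIntegral_tendsto_integral h₂ tendsto_neg_atTop_atBot tendsto_id)).add
    ((hvertical.mono_left atTop_le_cocompact).const_smul I)).sub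
    (((hvertical.mono_left atBot_le_cocompact).comp tendsto_neg_atTop_atBot).const_smul I)
  simp only [Function.comp_apply, id, hrect, smul_zero, add_zero, sub_zero] at hlim
  exact sub_eq_zero.1 (tendsto_nhds_unique tendsto_const_nhds hlim).symm

lemma integral_Ioi_zero_eq_integral_comp_exp {E : Type*} [NormedAddCommGroup E] [NormedSpace ℝ E]
    (h : ℝ → E) : ∫ t in Ioi 0, h t = ∫ x, Real.exp x • h (Real.exp x) := by
  simpa [Real.range_exp, abs_of_pos (Real.exp_pos _)] using
    integral_image_eq_integral_abs_deriv_smul MeasurableSet.univ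
      (fun x _ => (Real.hasDerivAt_exp x).hasDerivWithinAt) Real.exp_injective.injOn h

lemma integrableOn_Ioi_zero_iff_integrable_comp_exp {E : Type*} [NormedAddCommGroup E]
    [NormedSpace ℝ E] (h : ℝ → E) :
    IntegrableOn h (Ioi 0) ↔ Integrable fun x => Real.exp x • h (Real.exp x) := by
  simpa [Real.range_exp, abs_of_pos (Real.exp_pos _)] using
    integrableOn_image_iff_integrableOn_abs_deriv_smul MeasurableSet.univ
      (fun x _ => (Real.hasDerivAt_exp x).hasDerivWithinAt) Real.exp_injective.injOn h

lemma ofReal_exp_mul_eq_cexp {z : ℂ} (hz : z ≠ 0) (x : ℝ) :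
    (Real.exp x : ℂ) * z = cexp (↑(x + Real.log ‖z‖) + z.arg * I) := by
  rw [ofReal_add, add_assoc, exp_add, exp_add, ← ofReal_exp, ← ofReal_exp,
    Real.exp_log (norm_pos_iff.2 hz), norm_mul_exp_arg_mul_I]

lemma exp_smul_comp_mul_div {g : ℂ → ℂ} {z : ℂ} (hz : z ≠ 0) :
    (fun x : ℝ => Real.exp x • (g (Real.exp x * z) / Real.exp x)) =
      fun x => g (cexp (↑(x + Real.log ‖z‖) + z.arg * I)) := by
  ext x
  rw [real_smul, mul_div_cancel₀ _ (ofReal_ne_zero.2 (Real.exp_pos x).ne'),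
    ofReal_exp_mul_eq_cexp hz]

lemma integrableOn_Ioi_comp_mul_div_iff (g : ℂ → ℂ) {z : ℂ} (hz : z ≠ 0) :
    IntegrableOn (fun t : ℝ => g (t * z) / t) (Ioi 0) ↔
      Integrable fun x : ℝ => g (cexp (x + z.arg * I)) := by
  rw [integrableOn_Ioi_zero_iff_integrable_comp_exp, exp_smul_comp_mul_div hz]
  exact ⟨fun h => by simpa using h.comp_add_right (-Real.log ‖z‖),
    fun h => h.comp_add_right (Real.log ‖z‖)⟩

lemma integral_Ioi_comp_mul_div (g : ℂ → ℂ) {z : ℂ} (hz : z ≠ 0) :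
    ∫ t in Ioi (0 : ℝ), g (t * z) / t = ∫ x : ℝ, g (cexp (x + z.arg * I)) := by
  rw [integral_Ioi_zero_eq_integral_comp_exp, exp_smul_comp_mul_div hz]
  exact integral_add_right_eq_self (fun x : ℝ => g (cexp (x + z.arg * I))) _

section Sector

variable {μ C ε : ℝ} {g : ℂ → ℂ}

lemma norm_comp_cexp_le (hε : 0 ≤ ε)
    (hbd : ∀ z ∈ sector μ, ‖g z‖ ≤ C * min (‖z‖ ^ ε) (‖z‖ ^ (-ε))) {w : ℂ} (hw : |w.im| < μ) :
    ‖g (cexp w)‖ ≤ C * Real.exp (-ε * |w.re|) := by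
  simpa [norm_exp, min_exp_rpow_exp_rpow_neg hε] using hbd _ (cexp_mem_sector hw)

variable (hg : DifferentiableOn ℂ g (sector μ)) (hε : 0 < ε)
  (hbd : ∀ z ∈ sector μ, ‖g z‖ ≤ C * min (‖z‖ ^ ε) (‖z‖ ^ (-ε)))
include hg hε hbd

lemma integrable_comp_cexp_add_mul_I {y : ℝ} (hy : |y| < μ) :
    Integrable fun x : ℝ => g (cexp (x + y * I)) :=
  ((integrable_exp_neg_mul_abs hε).const_mul C).mono'
    (hg.continuousOn.comp_continuous (by fun_prop)
      fun x => cexp_mem_sector (by simpa using hy)).aestronglyMeasurable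
    (.of_forall fun x => by
      simpa using norm_comp_cexp_le hε.le hbd (w := x + y * I) (by simpa using hy))

lemma integral_comp_cexp_add_mul_I {y : ℝ} (hy : |y| < μ) :
    ∫ x : ℝ, g (cexp (x + y * I)) = ∫ x : ℝ, g (cexp x) := by
  have hstrip : ∀ s ∈ [[0, y]], |s| < μ := fun s hs => by
    simpa using (abs_sub_left_of_mem_uIcc hs).trans_lt (by simpa using hy)
  have h0 : |(0 : ℝ)| < μ := by simpa using (abs_nonneg y).trans_lt hy
  symm
  simpa using integral_add_mul_I_eq_of_differentiableOn (f := g ∘ cexp)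
    (hg.comp differentiable_exp.differentiableOn fun w hw => cexp_mem_sector (hstrip _ hw))
    (integrable_comp_cexp_add_mul_I hg hε hbd h0) (integrable_comp_cexp_add_mul_I hg hε hbd hy)
    (fun x s hs => by
      simpa using norm_comp_cexp_le hε.le hbd (w := x + s * I) (by simpa using hstrip s hs))
    (by simpa using (tendsto_exp_neg_mul_abs_cocompact hε).const_mul C)

end Sector

theorem stmt7_general (μ : ℝ)
    (g : ℂ → ℂ)
    (hg : DifferentiableOn ℂ g {z : ℂ | z ≠ 0 ∧ |z.arg| < μ})
    (C ε : ℝ) (hε : 0 < ε)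
    (hbd : ∀ z ∈ {z : ℂ | z ≠ 0 ∧ |z.arg| < μ},
      ‖g z‖ ≤ C * min (‖z‖ ^ ε) (‖z‖ ^ (-ε))) :
    ∀ z ∈ {z : ℂ | z ≠ 0 ∧ |z.arg| < μ},
      MeasureTheory.IntegrableOn (fun t : ℝ => g ((t : ℂ) * z) / (t : ℂ)) (Set.Ioi 0) ∧
        ∫ t in Set.Ioi (0 : ℝ), g ((t : ℂ) * z) / (t : ℂ)
          = ∫ t in Set.Ioi (0 : ℝ), g (t : ℂ) / (t : ℂ) := by
  rintro z ⟨hz, harg⟩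
  refine ⟨(integrableOn_Ioi_comp_mul_div_iff g hz).2
    (integrable_comp_cexp_add_mul_I hg hε hbd harg), ?_⟩
  simpa [integral_Ioi_comp_mul_div g hz, integral_comp_cexp_add_mul_I hg hε hbd harg]
    using (integral_Ioi_comp_mul_div g one_ne_zero).symm

/-- If `g` is holomorphic on the open sector `S` of half-angle `μ` with polynomial
decay at `0` and `∞`, then for every `z ∈ S` the integral `∫₀^∞ g(tz) dt/t`
converges absolutely and its value is independent of `z`, namely `∫₀^∞ g(t) dt/t`. -/
theorem stmt7 (μ : ℝ) (hμ0 : 0 < μ) (hμπ : μ < Real.pi)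
    (g : ℂ → ℂ)
    (hg : DifferentiableOn ℂ g {z : ℂ | z ≠ 0 ∧ |z.arg| < μ})
    (C ε : ℝ) (hC : 0 < C) (hε : 0 < ε)
    (hbd : ∀ z ∈ {z : ℂ | z ≠ 0 ∧ |z.arg| < μ},
      ‖g z‖ ≤ C * min (‖z‖ ^ ε) (‖z‖ ^ (-ε))) :
    ∀ z ∈ {z : ℂ | z ≠ 0 ∧ |z.arg| < μ},
      MeasureTheory.IntegrableOn (fun t : ℝ => g ((t : ℂ) * z) / (t : ℂ)) (Set.Ioi 0) ∧
        ∫ t in Set.Ioi (0 : ℝ), g ((t : ℂ) * z) / (t : ℂ)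
          = ∫ t in Set.Ioi (0 : ℝ), g (t : ℂ) / (t : ℂ) :=
  stmt7_general μ g hg C ε hε hbd
end

section
/- Let X be a reflexive Banach space and A a closed, densely defined linear operator in X such that for every real t ≠ 0 the operator I + i t A is invertible with sup_{t ≠ 0} ‖(I + i t A)^{-1}‖ < ∞. Then X decomposes as the topological direct sum X = ker(A) ⊕ closure(ran(A)). -/
/-!
Let `R t = (1 + i t A)⁻¹`. Each `R t` fixes `ker A`, while `i t • R t (A z) = z - R t z` shows
`R t (A z) → 0`; by the uniform bound on `R t` this extends to `R t y → 0` for every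
`y ∈ closure (ran A)`, so the two subspaces meet only in `0`.

For arbitrary `x`, reflexivity provides a weak limit point `p` of `R t x` along an ultrafilter.
The pairs `(R t x, A (R t x))` lie in the graph of `A`, which is weakly closed, and their second
components `(i t)⁻¹ • (x - R t x)` tend to `0`; hence `p ∈ ker A`. Likewise
`x - R t x = i t • A (R t x)` lies in `ran A`, so `x - p ∈ closure (ran A)`. Both subspaces
being closed, the projection is bounded by the closed graph theorem.
-/

open Filter Topology Bornology

section WeakTopology

variable {𝕜 E F : Type*} [RCLike 𝕜] [NormedAddCommGroup E] [NormedSpace 𝕜 E]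
  [NormedAddCommGroup F] [NormedSpace 𝕜 F] {ι : Type*} {l : Filter ι}

theorem Submodule.mem_of_tendsto_toWeakSpace [NormedSpace ℝ E] [IsScalarTower ℝ 𝕜 E] [l.NeBot]
    (S : Submodule 𝕜 E) (hS : IsClosed (S : Set E)) {u : ι → E} {p : E}
    (hu : ∀ᶠ i in l, u i ∈ S)
    (hlim : Tendsto (fun i ↦ toWeakSpace 𝕜 E (u i)) l (𝓝 (toWeakSpace 𝕜 E p))) : p ∈ S := by
  have hweak : IsClosed (toWeakSpace 𝕜 E '' S) := by
    have h := (S.restrictScalars ℝ).convex.toWeakSpace_closure 𝕜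
    rw [Submodule.coe_restrictScalars, hS.closure_eq] at h
    exact h ▸ isClosed_closure
  simpa using hweak.mem_of_tendsto hlim (hu.mono fun i hi ↦ Set.mem_image_of_mem _ hi)

theorem tendsto_toWeakSpace_prodMk {u : ι → E} {w : ι → F} {p : E} {q : F}
    (hu : Tendsto (fun i ↦ toWeakSpace 𝕜 E (u i)) l (𝓝 (toWeakSpace 𝕜 E p)))
    (hw : Tendsto (fun i ↦ toWeakSpace 𝕜 F (w i)) l (𝓝 (toWeakSpace 𝕜 F q))) :
    Tendsto (fun i ↦ toWeakSpace 𝕜 (E × F) (u i, w i)) l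
      (𝓝 (toWeakSpace 𝕜 (E × F) (p, q))) := by
  have hinl := ((WeakSpace.map (ContinuousLinearMap.inl 𝕜 E F)).continuous.tendsto _).comp hu
  have hinr := ((WeakSpace.map (ContinuousLinearMap.inr 𝕜 E F)).continuous.tendsto _).comp hw
  convert hinl.add hinr using 2 <;> exact (congrArg₂ Prod.mk (add_zero _) (zero_add _)).symm

theorem exists_tendsto_toWeakSpace_of_surjective_inclusionInDoubleDual
    (hrefl : Function.Surjective (NormedSpace.inclusionInDoubleDual 𝕜 E)) (U : Ultrafilter ι)
    {u : ι → E} {r : ℝ} (hu : ∀ᶠ i in U, ‖u i‖ ≤ r) :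
    ∃ p : E, Tendsto (fun i ↦ toWeakSpace 𝕜 E (u i)) U (𝓝 (toWeakSpace 𝕜 E p)) := by
  set K : Set (WeakSpace 𝕜 E) := toWeakSpace 𝕜 E '' Metric.closedBall 0 r
  have hK : IsCompact (closure K) := by
    refine NormedSpace.isCompact_closure_of_isBounded 𝕜 E K ?_ ?_
    · rw [Set.preimage_image_eq _ (toWeakSpace 𝕜 E).injective]
      exact Metric.isBounded_closedBall
    · rintro φ -
      obtain ⟨p, hp⟩ := hrefl (WeakDual.toStrongDual φ)
      exact ⟨toWeakSpace 𝕜 E p, hp⟩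
  have hUK : ↑(U.map fun i ↦ toWeakSpace 𝕜 E (u i)) ≤ 𝓟 (closure K) :=
    le_principal_iff.mpr <| mem_map.mpr <|
      hu.mono fun i hi ↦ subset_closure ⟨u i, by simpa using hi, rfl⟩
  obtain ⟨p, -, hp⟩ := hK.ultrafilter_le_nhds _ hUK
  exact ⟨(toWeakSpace 𝕜 E).symm p, hp⟩

end WeakTopology

namespace LinearPMap

section Kernel

variable {R E F : Type*} [Ring R] [AddCommGroup E] [Module R E] [AddCommGroup F] [Module R F]

def ker (A : E →ₗ.[R] F) : Submodule R E := A.graph.comap (LinearMap.inl R E F)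

theorem mem_ker_iff {A : E →ₗ.[R] F} {x : E} :
    x ∈ A.ker ↔ ∃ h : x ∈ A.domain, A ⟨x, h⟩ = 0 := by
  simp [ker, Subtype.exists]

end Kernel

theorem IsClosed.isClosed_ker {R E F : Type*} [CommRing R] [AddCommGroup E] [Module R E]
    [AddCommGroup F] [Module R F] [TopologicalSpace E] [TopologicalSpace F]
    {A : E →ₗ.[R] F} (hA : A.IsClosed) : _root_.IsClosed (A.ker : Set E) :=
  hA.preimage (Continuous.prodMk_left 0)

section Resolvent

variable {𝕜 E : Type*} [NontriviallyNormedField 𝕜] [NormedAddCommGroup E] [NormedSpace 𝕜 E]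

structure IsInvOneAddSMul (A : E →ₗ.[𝕜] E) (c : 𝕜) (R : E →L[𝕜] E) : Prop where
  rightInv : ∀ x, ∃ h : R x ∈ A.domain, R x + c • A ⟨R x, h⟩ = x
  leftInv : ∀ y : A.domain, R (y + c • A y) = y

namespace IsInvOneAddSMul

variable {A : E →ₗ.[𝕜] E} {c : 𝕜} {R : E →L[𝕜] E}

theorem apply_of_mem_ker (hR : A.IsInvOneAddSMul c R) {x : E} (hx : x ∈ A.ker) : R x = x := by
  obtain ⟨hx, hAx⟩ := mem_ker_iff.mp hx
  simpa [hAx] using hR.leftInv ⟨x, hx⟩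

theorem smul_apply_apply (hR : A.IsInvOneAddSMul c R) (y : A.domain) :
    c • R (A y) = y - R y := by
  rw [eq_sub_iff_add_eq', ← R.map_smul, ← R.map_add, hR.leftInv]

theorem exists_mem_graph (hR : A.IsInvOneAddSMul c R) (x : E) :
    ∃ y, (R x, y) ∈ A.graph ∧ c • y = x - R x := by
  obtain ⟨h, hx⟩ := hR.rightInv x
  exact ⟨A ⟨R x, h⟩, A.mem_graph ⟨R x, h⟩, eq_sub_of_add_eq' hx⟩

theorem sub_apply_mem_range (hR : A.IsInvOneAddSMul c R) (x : E) :
    x - R x ∈ LinearMap.range A.toFun := by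
  obtain ⟨h, hx⟩ := hR.rightInv x
  rw [← eq_sub_of_add_eq' hx]
  exact Submodule.smul_mem _ c (LinearMap.mem_range_self _ _)

end IsInvOneAddSMul

section ResolventFamily

variable {A : E →ₗ.[𝕜] E} {ι : Type*} {l : Filter ι} {c : ι → 𝕜} {R : ι → E →L[𝕜] E} {C : ℝ}

theorem isBoundedUnder_norm_sub_apply (hRC : ∀ i, ‖R i‖ ≤ C) (x : E) :
    IsBoundedUnder (· ≤ ·) l fun i ↦ ‖x - R i x‖ :=
  isBoundedUnder_of ⟨‖x‖ + C * ‖x‖, fun i ↦ (norm_sub_le _ _).trans <|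
    add_le_add le_rfl ((R i).le_of_opNorm_le (hRC i) x)⟩

theorem tendsto_apply_apply_nhds_zero (hR : ∀ i, A.IsInvOneAddSMul (c i) (R i))
    (hRC : ∀ i, ‖R i‖ ≤ C) (hc : Tendsto c l (cobounded 𝕜)) (y : A.domain) :
    Tendsto (fun i ↦ R i (A y)) l (𝓝 0) := by
  refine tendsto_zero_of_isBoundedUnder_smul_of_tendsto_cobounded ?_ hc
  simpa only [(hR _).smul_apply_apply] using isBoundedUnder_norm_sub_apply hRC (y : E)

theorem tendsto_apply_nhds_zero_of_mem_closure_range (hR : ∀ i, A.IsInvOneAddSMul (c i) (R i))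
    (hRC : ∀ i, ‖R i‖ ≤ C) (hc : Tendsto c l (cobounded 𝕜)) {x : E}
    (hx : x ∈ (LinearMap.range A.toFun).topologicalClosure) :
    Tendsto (fun i ↦ R i x) l (𝓝 0) := by
  have hequi : Equicontinuous fun i ↦ (R i : E → E) :=
    ((NormedSpace.equicontinuous_TFAE R).out 5 1).mp (⟨C, hRC⟩ : ∃ C, ∀ i, ‖R i‖ ≤ C)
  refine closure_minimal ?_ (hequi.isClosed_setOfPred_tendsto continuous_const) hx
  rintro _ ⟨y, rfl⟩
  exact tendsto_apply_apply_nhds_zero hR hRC hc y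

theorem disjoint_ker_closure_range [l.NeBot] (hR : ∀ i, A.IsInvOneAddSMul (c i) (R i))
    (hRC : ∀ i, ‖R i‖ ≤ C) (hc : Tendsto c l (cobounded 𝕜)) :
    Disjoint A.ker (LinearMap.range A.toFun).topologicalClosure := by
  refine Submodule.disjoint_def.mpr fun x hker hran ↦ ?_
  have hlim := tendsto_apply_nhds_zero_of_mem_closure_range hR hRC hc hran
  simp only [(hR _).apply_of_mem_ker hker] at hlim
  exact tendsto_nhds_unique tendsto_const_nhds hlim

end ResolventFamily

end Resolvent

section Reflexive

variable {𝕜 E : Type*} [RCLike 𝕜] [NormedAddCommGroup E] [NormedSpace 𝕜 E] [NormedSpace ℝ E]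
  [IsScalarTower ℝ 𝕜 E] {A : E →ₗ.[𝕜] E} {ι : Type*} {l : Filter ι} {c : ι → 𝕜}
  {R : ι → E →L[𝕜] E} {C : ℝ}

theorem codisjoint_ker_closure_range [l.NeBot]
    (hrefl : Function.Surjective (NormedSpace.inclusionInDoubleDual 𝕜 E)) (hA : A.IsClosed)
    (hR : ∀ i, A.IsInvOneAddSMul (c i) (R i)) (hRC : ∀ i, ‖R i‖ ≤ C)
    (hc : Tendsto c l (cobounded 𝕜)) :
    Codisjoint A.ker (LinearMap.range A.toFun).topologicalClosure := by
  refine codisjoint_iff.mpr (Submodule.eq_top_iff'.mpr fun x ↦ ?_)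
  set U := Ultrafilter.of l
  obtain ⟨p, hp⟩ := exists_tendsto_toWeakSpace_of_surjective_inclusionInDoubleDual hrefl U
    (Eventually.of_forall fun i ↦ (R i).le_of_opNorm_le (hRC i) x)
  choose y hy hcy using fun i ↦ (hR i).exists_mem_graph x
  have hy0 : Tendsto y U (𝓝 0) :=
    tendsto_zero_of_isBoundedUnder_smul_of_tendsto_cobounded
      (by simpa only [hcy] using isBoundedUnder_norm_sub_apply hRC x)
      (hc.mono_left (Ultrafilter.of_le l))
  have hker : p ∈ A.ker := A.graph.mem_of_tendsto_toWeakSpace hA (Eventually.of_forall hy)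
    (tendsto_toWeakSpace_prodMk hp (((toWeakSpaceCLM 𝕜 E).continuous.tendsto 0).comp hy0))
  have hran : x - p ∈ (LinearMap.range A.toFun).topologicalClosure :=
    Submodule.mem_of_tendsto_toWeakSpace _ (Submodule.isClosed_topologicalClosure _)
      (Eventually.of_forall fun i ↦
        Submodule.le_topologicalClosure _ ((hR i).sub_apply_mem_range x))
      ((tendsto_const_nhds (x := toWeakSpace 𝕜 E x)).sub hp)
  exact Submodule.mem_sup.mpr ⟨p, hker, x - p, hran, add_sub_cancel _ _⟩

theorem isTopCompl_ker_closure_range [CompleteSpace E] [l.NeBot]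
    (hrefl : Function.Surjective (NormedSpace.inclusionInDoubleDual 𝕜 E)) (hA : A.IsClosed) (hR : ∀ i, A.IsInvOneAddSMul (c i) (R i)) (hRC : ∀ i, ‖R i‖ ≤ C)
    (hc : Tendsto c l (cobounded 𝕜)) :
    Submodule.IsTopCompl A.ker (LinearMap.range A.toFun).topologicalClosure :=
  Submodule.IsCompl.isTopCompl_of_isClosed
    ⟨disjoint_ker_closure_range hR hRC hc, codisjoint_ker_closure_range hrefl hA hR hRC hc⟩
    hA.isClosed_ker (Submodule.isClosed_topologicalClosure _)

end Reflexive

end LinearPMap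

open LinearPMap Submodule in
theorem stmt17_general {X : Type*} [NormedAddCommGroup X] [NormedSpace ℂ X] [CompleteSpace X]
    (hrefl : Function.Surjective (NormedSpace.inclusionInDoubleDual ℂ X))
    (A : X →ₗ.[ℂ] X)
    (hclosed : IsClosed (A.graph : Set (X × X)))
    (Cres : ℝ)
    (hres : ∀ t : ℝ, t ≠ 0 → ∃ R : X →L[ℂ] X, ‖R‖ ≤ Cres ∧
      (∀ x : X, ∃ h : R x ∈ A.domain, R x + (Complex.I * (t : ℂ)) • A ⟨R x, h⟩ = x) ∧
      (∀ y : A.domain, R ((y : X) + (Complex.I * (t : ℂ)) • A y) = y)) :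
    ∃ P : X →L[ℂ] X,
      (∀ x, P (P x) = P x) ∧
      (∀ x : X, ∃ h : P x ∈ A.domain, A ⟨P x, h⟩ = 0) ∧
      (∀ x : X, (∃ h : x ∈ A.domain, A ⟨x, h⟩ = 0) → P x = x) ∧
      (∀ x ∈ closure (Set.range fun y : A.domain => A y), P x = 0) ∧
      (∀ x : X, x - P x ∈ closure (Set.range fun y : A.domain => A y)) := by
  choose R hRC hright hleft using fun n : ℕ ↦ hres (n + 1) n.cast_add_one_pos.ne'
  have hc : Tendsto (fun n : ℕ ↦ Complex.I * ((n + 1 : ℝ) : ℂ)) atTop (cobounded ℂ) := by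
    have hnorm (n : ℕ) : ‖Complex.I * ((n + 1 : ℝ) : ℂ)‖ = n + 1 := by
      rw [norm_mul, Complex.norm_I, one_mul, Complex.norm_real, Real.norm_of_nonneg (by positivity)]
    rw [← tendsto_norm_atTop_iff_cobounded]
    simpa only [hnorm] using tendsto_natCast_atTop_atTop.atTop_add tendsto_const_nhds
  have h := isTopCompl_ker_closure_range hrefl hclosed (fun n ↦ ⟨hright n, hleft n⟩) hRC hc
  refine ⟨A.ker.projectionL _ h,
    fun x ↦ ?_, fun x ↦ ?_, fun x hx ↦ ?_, fun x hx ↦ ?_, fun x ↦ ?_⟩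
  · exact congr($(isIdempotentElem_projectionL h) x)
  · exact mem_ker_iff.mp (projectionL_apply_mem h x)
  · exact projectionL_apply_left h ⟨x, mem_ker_iff.mpr hx⟩
  · exact projectionL_apply_right h ⟨x, hx⟩
  · rw [← projectionL_eq_self_sub_projectionL h]
    exact projectionL_apply_mem h.symm x

/-- Let `X` be a reflexive Banach space (the canonical embedding into the double dual
is surjective) and `A` a closed, densely defined operator in `X` such that `I + itA`
is invertible for every real `t ≠ 0` with a uniform bound on the inverses. Then `X`
decomposes as the topological direct sum `X = ker A ⊕ closure (ran A)`, witnessed by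
a bounded projection onto `ker A` vanishing on `closure (ran A)`. -/
theorem stmt17 {X : Type*} [NormedAddCommGroup X] [NormedSpace ℂ X] [CompleteSpace X]
    (hrefl : Function.Surjective (NormedSpace.inclusionInDoubleDual ℂ X))
    (A : X →ₗ.[ℂ] X)
    (hclosed : IsClosed (A.graph : Set (X × X)))
    (hdense : Dense (A.domain : Set X))
    (Cres : ℝ)
    (hres : ∀ t : ℝ, t ≠ 0 → ∃ R : X →L[ℂ] X, ‖R‖ ≤ Cres ∧
      (∀ x : X, ∃ h : R x ∈ A.domain, R x + (Complex.I * (t : ℂ)) • A ⟨R x, h⟩ = x) ∧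
      (∀ y : A.domain, R ((y : X) + (Complex.I * (t : ℂ)) • A y) = y)) :
    ∃ P : X →L[ℂ] X,
      (∀ x, P (P x) = P x) ∧
      (∀ x : X, ∃ h : P x ∈ A.domain, A ⟨P x, h⟩ = 0) ∧
      (∀ x : X, (∃ h : x ∈ A.domain, A ⟨x, h⟩ = 0) → P x = x) ∧
      (∀ x ∈ closure (Set.range fun y : A.domain => A y), P x = 0) ∧
      (∀ x : X, x - P x ∈ closure (Set.range fun y : A.domain => A y)) :=
  stmt17_general hrefl A hclosed Cres hres
end
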